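/- Let S = (S_t)_{t∈[0,1]} be a càdlàg bounded adapted good integrator. Then for every ε > 0 there exist a constant C > 0 and a sequence (ρ_n)_{n≥1} of [0,1]∪{∞}-valued stopping times such that P(ρ_n = ∞) ≥ 1 − ε and Var(S^{ρ_n}, D_n) ≤ C for every n, where S^{ρ_n} denotes S stopped at ρ_n. -/

import Mathlib

open MeasureTheory Set Filter Topology

noncomputable section

namespace BD

variable {Ω : Type*} {m0 : MeasurableSpace Ω}

/-- The filtration is right-continuous. -/
def RightContinuousFiltration (ℱ : Filtration ℝ m0) : Prop :=
  ∀ t : ℝ, ℱ t = ⨅ s ∈ Set.Ioi t, ℱ s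

/-- `ℱ 0` contains all `P`-null sets. -/
def CompleteFiltration (ℱ : Filtration ℝ m0) (P : Measure Ω) : Prop :=
  ∀ s : Set Ω, P s = 0 → MeasurableSet[ℱ 0] s

/-- The usual conditions: right continuity and completeness. -/
def UsualConditions (ℱ : Filtration ℝ m0) (P : Measure Ω) : Prop :=
  RightContinuousFiltration ℱ ∧ CompleteFiltration ℱ P

/-- A real function is càdlàg on the time interval `[0,1]`: it is right-continuous on `[0,1)`
and has left limits on `(0,1]`. -/
def IsCadlagFun (f : ℝ → ℝ) : Prop :=
  (∀ t ∈ Set.Ico (0:ℝ) 1, ContinuousWithinAt f (Set.Ici t) t) ∧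
  (∀ t ∈ Set.Ioc (0:ℝ) 1, ∃ l : ℝ, Tendsto f (nhdsWithin t (Set.Iio t)) (nhds l))

/-- A process is càdlàg if all its paths are càdlàg on `[0,1]`. -/
def Cadlag (S : ℝ → Ω → ℝ) : Prop := ∀ ω, IsCadlagFun fun t => S t ω

/-- The process is adapted on the time interval `[0,1]`. -/
def AdaptedOn (ℱ : Filtration ℝ m0) (S : ℝ → Ω → ℝ) : Prop :=
  ∀ t ∈ Set.Icc (0:ℝ) 1, StronglyMeasurable[ℱ t] (S t)

/-- A `[0,1] ∪ {∞}`-valued random time (modelled as a `WithTop ℝ`-valued map) is a stopping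
time if `{ρ ≤ t} ∈ ℱ t` for every `t`. -/
def IsStoppingTimeTop (ℱ : Filtration ℝ m0) (ρ : Ω → WithTop ℝ) : Prop :=
  ∀ t : ℝ, MeasurableSet[ℱ t] {ω | ρ ω ≤ (t : WithTop ℝ)}

/-- The random time takes values in `[0,1] ∪ {∞}`. -/
def ValuedInUnitOrTop (ρ : Ω → WithTop ℝ) : Prop :=
  ∀ ω, ρ ω = ⊤ ∨ ∃ t ∈ Set.Icc (0:ℝ) 1, ρ ω = (t : WithTop ℝ)

/-- The process `S` stopped at the (possibly infinite) random time `ρ`. -/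
def stopped (S : ℝ → Ω → ℝ) (ρ : Ω → WithTop ℝ) : ℝ → Ω → ℝ :=
  fun t ω => S (WithTop.untopD t (min (t : WithTop ℝ) (ρ ω))) ω

/-- A simple integrand `H = ∑_{i=1}^k H^i 1_{(τ_i, τ_{i+1}]}` where the `τ_i` are `[0,1]`-valued
stopping times, increasing in `i`, and `H^i` is bounded and `ℱ_{τ_i}`-measurable. -/
structure SimpleIntegrand (ℱ : Filtration ℝ m0) where
  k : ℕ
  τ : Fin (k + 1) → Ω → ℝ
  τ_mono : ∀ ω, Monotone fun i => τ i ω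
  τ_mem : ∀ i ω, τ i ω ∈ Set.Icc (0:ℝ) 1
  τ_stopping : ∀ i, IsStoppingTime ℱ (fun ω => ((τ i ω : ℝ) : WithTop ℝ))
  H : Fin k → Ω → ℝ
  H_bdd : ∀ i, ∃ C : ℝ, ∀ ω, |H i ω| ≤ C
  H_meas : ∀ i : Fin k,
    StronglyMeasurable[(τ_stopping i.castSucc).measurableSpace] (H i)

/-- The value of a simple integrand at time `t`. -/
def SimpleIntegrand.val {ℱ : Filtration ℝ m0} (Hs : SimpleIntegrand ℱ) (t : ℝ) (ω : Ω) : ℝ :=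
  ∑ i : Fin Hs.k, if Hs.τ i.castSucc ω < t ∧ t ≤ Hs.τ i.succ ω then Hs.H i ω else 0

/-- `c` is a uniform (sup-norm) bound for the simple integrand. -/
def SimpleIntegrand.BddBy {ℱ : Filtration ℝ m0} (Hs : SimpleIntegrand ℱ) (c : ℝ) : Prop :=
  ∀ t ω, |Hs.val t ω| ≤ c

/-- The elementary stochastic integral `I_S(H) = ∑ H^i (S_{τ_{i+1}} - S_{τ_i})`. -/
def elemIntegral {ℱ : Filtration ℝ m0} (S : ℝ → Ω → ℝ) (Hs : SimpleIntegrand ℱ) (ω : Ω) : ℝ :=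
  ∑ i : Fin Hs.k, Hs.H i ω * (S (Hs.τ i.succ ω) ω - S (Hs.τ i.castSucc ω) ω)

/-- `S` is a good integrator: `I_S` is continuous from the simple integrands (with the sup norm)
to `L⁰(P)`, i.e. `‖Hⁿ‖_∞ → 0` implies `I_S(Hⁿ) → 0` in probability. -/
def GoodIntegrator (ℱ : Filtration ℝ m0) (P : Measure Ω) (S : ℝ → Ω → ℝ) : Prop :=
  ∀ (Hs : ℕ → SimpleIntegrand ℱ) (c : ℕ → ℝ),
    (∀ n, (Hs n).BddBy (c n)) → Tendsto c atTop (nhds 0) →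
    TendstoInMeasure P (fun n => elemIntegral S (Hs n)) atTop 0

/-- A submartingale on the time interval `[0,1]`. -/
def SubmartingaleOn (ℱ : Filtration ℝ m0) (P : Measure Ω) (Y : ℝ → Ω → ℝ) : Prop :=
  AdaptedOn ℱ Y ∧ (∀ t ∈ Set.Icc (0:ℝ) 1, Integrable (Y t) P) ∧
    ∀ s t : ℝ, s ∈ Set.Icc (0:ℝ) 1 → t ∈ Set.Icc (0:ℝ) 1 → s ≤ t →
      ∀ᵐ ω ∂P, Y s ω ≤ (P[Y t | ℱ s]) ω

/-- A martingale on the time interval `[0,1]`. -/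
def MartingaleOn (ℱ : Filtration ℝ m0) (P : Measure Ω) (Y : ℝ → Ω → ℝ) : Prop :=
  AdaptedOn ℱ Y ∧ (∀ t ∈ Set.Icc (0:ℝ) 1, Integrable (Y t) P) ∧
    ∀ s t : ℝ, s ∈ Set.Icc (0:ℝ) 1 → t ∈ Set.Icc (0:ℝ) 1 → s ≤ t →
      (P[Y t | ℱ s]) =ᵐ[P] Y s

/-- A local martingale on `[0,1]`: for every `ε > 0` there is a `[0,1] ∪ {∞}`-valued stopping
time `ρ` with `P(ρ = ∞) ≥ 1 - ε` such that the stopped process is a martingale. -/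
def IsLocalMartingaleOn (ℱ : Filtration ℝ m0) (P : Measure Ω) (M : ℝ → Ω → ℝ) : Prop :=
  ∀ ε : ℝ, 0 < ε → ∃ ρ : Ω → WithTop ℝ, IsStoppingTimeTop ℱ ρ ∧ ValuedInUnitOrTop ρ ∧
    1 - ENNReal.ofReal ε ≤ P {ω | ρ ω = ⊤} ∧ MartingaleOn ℱ P (stopped M ρ)

/-- All paths of the process have finite total variation on `[0,1]`. -/
def FiniteVariationPaths (A : ℝ → Ω → ℝ) : Prop :=
  ∀ ω, BoundedVariationOn (fun t => A t ω) (Set.Icc (0:ℝ) 1)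

/-- `S` is a semimartingale on `[0,1]`: it is (up to indistinguishability on `[0,1]`) the sum
of a càdlàg local martingale and a càdlàg adapted process of finite variation. -/
def IsSemimartingaleOn (ℱ : Filtration ℝ m0) (P : Measure Ω) (S : ℝ → Ω → ℝ) : Prop :=
  ∃ M A : ℝ → Ω → ℝ, Cadlag M ∧ IsLocalMartingaleOn ℱ P M ∧
    Cadlag A ∧ AdaptedOn ℱ A ∧ FiniteVariationPaths A ∧
    ∀ᵐ ω ∂P, ∀ t ∈ Set.Icc (0:ℝ) 1, S t ω = M t ω + A t ω

/-- A partition `0 = t_0 < t_1 < … < t_n = 1` of `[0,1]`. -/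
structure Partition where
  n : ℕ
  t : Fin (n + 1) → ℝ
  strictMono : StrictMono t
  first : t 0 = 0
  last : t (Fin.last n) = 1

/-- The mean variation `Var(S, π) = E ∑_i |E[S_{t_{i+1}} - S_{t_i} | ℱ_{t_i}]|` of `S`
along the partition `π`. -/
def meanVar (ℱ : Filtration ℝ m0) (P : Measure Ω) (S : ℝ → Ω → ℝ) (π : Partition) : ℝ :=
  ∑ i : Fin π.n,
    ∫ ω, |(P[fun ω => S (π.t i.succ) ω - S (π.t i.castSucc) ω | ℱ (π.t i.castSucc)]) ω| ∂P

/-- The `n`-th dyadic partition `{0, 1/2ⁿ, …, 1}` of `[0,1]`. -/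
def dyadicPartition (n : ℕ) : Partition where
  n := 2 ^ n
  t := fun i => (i.val : ℝ) / 2 ^ n
  strictMono := by
    intro i j hij
    have h2 : (0:ℝ) < 2 ^ n := by positivity
    have h : (i.val : ℝ) < (j.val : ℝ) := by exact_mod_cast hij
    exact div_lt_div_of_pos_right h h2
  first := by simp
  last := by
    have h2 : (2:ℝ) ^ n ≠ 0 := by positivity
    simp [Fin.last, h2]

/-- The Riemann sum `∑_{i=0}^{2ⁿ-1} H_{i/2ⁿ} (S_{(i+1)/2ⁿ} - S_{i/2ⁿ})`. -/
def riemannSum (S H : ℝ → Ω → ℝ) (n : ℕ) (ω : Ω) : ℝ :=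
  ∑ i ∈ Finset.range (2 ^ n),
    H ((i : ℝ) / 2 ^ n) ω * (S (((i : ℝ) + 1) / 2 ^ n) ω - S ((i : ℝ) / 2 ^ n) ω)

/-- A bounded adapted process with continuous paths on `[0,1]`. -/
def BddContAdapted (ℱ : Filtration ℝ m0) (H : ℝ → Ω → ℝ) : Prop :=
  (∃ C : ℝ, ∀ t ∈ Set.Icc (0:ℝ) 1, ∀ ω, |H t ω| ≤ C) ∧ AdaptedOn ℱ H ∧
    ∀ ω, ContinuousOn (fun t => H t ω) (Set.Icc (0:ℝ) 1)

/-- `S` is a Riemann integrator: for every bounded adapted continuous process `H`, the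
Riemann sums along the dyadic partitions converge in probability. -/
def RiemannIntegrator (ℱ : Filtration ℝ m0) (P : Measure Ω) (S : ℝ → Ω → ℝ) : Prop :=
  ∀ H : ℝ → Ω → ℝ, BddContAdapted ℱ H →
    ∃ L : Ω → ℝ, TendstoInMeasure P (fun n => riemannSum S H n) atTop L

/-- An element of `ℰ_{D_n}`: a process `∑_{i=0}^{2ⁿ-1} H^i 1_{(i/2ⁿ, (i+1)/2ⁿ]}` with `H⁰ = 0`
and `H^i` bounded and `ℱ_{(i-1)/2ⁿ}`-measurable for `1 ≤ i ≤ 2ⁿ - 1`. -/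
structure DyadicIntegrand (ℱ : Filtration ℝ m0) where
  n : ℕ
  H : ℕ → Ω → ℝ
  H_zero : H 0 = fun _ => 0
  H_bdd : ∀ i, ∃ C : ℝ, ∀ ω, |H i ω| ≤ C
  H_meas : ∀ i : ℕ, 1 ≤ i → i < 2 ^ n →
    StronglyMeasurable[ℱ (((i : ℝ) - 1) / 2 ^ n)] (H i)

/-- The elementary integral of an element of `ℰ_{D_n}` against `S`. -/
def dyadicIntegral {ℱ : Filtration ℝ m0} (S : ℝ → Ω → ℝ) (D : DyadicIntegrand ℱ) (ω : Ω) : ℝ :=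
  ∑ i ∈ Finset.range (2 ^ D.n),
    D.H i ω * (S (((i : ℝ) + 1) / 2 ^ D.n) ω - S ((i : ℝ) / 2 ^ D.n) ω)

/-- `c` is a uniform bound for an element of `ℰ_{D_n}` (hence for its sup norm). -/
def DyadicIntegrand.BddBy {ℱ : Filtration ℝ m0} (D : DyadicIntegrand ℱ) (c : ℝ) : Prop :=
  ∀ i < 2 ^ D.n, ∀ ω, |D.H i ω| ≤ c

/-- The jump `ΔS_t = S_t - S_{t-}` of the process `S` at time `t`. -/
def jump (S : ℝ → Ω → ℝ) (t : ℝ) (ω : Ω) : ℝ :=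
  S t ω - Function.leftLim (fun s => S s ω) t

/-- The times `s ∈ (0, t]` at which `S` has a jump of size at least `1`. -/
def bigJumpTimes (S : ℝ → Ω → ℝ) (t : ℝ) (ω : Ω) : Set ℝ :=
  {s : ℝ | s ∈ Set.Ioc (0:ℝ) t ∧ 1 ≤ |jump S s ω|}

/-- The sum of the big jumps: `J_t = ∑_{0 < s ≤ t} ΔS_s 1_{|ΔS_s| ≥ 1}`. -/
def bigJumpPart (S : ℝ → Ω → ℝ) (t : ℝ) (ω : Ω) : ℝ :=
  ∑ᶠ s ∈ bigJumpTimes S t ω, jump S s ω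

/-!
Fix a partition `t₀ < ⋯ < tₙ` and write `Δᵢ = S_{tᵢ₊₁} - S_{tᵢ}`. Let
`σᵢ = sign E[Δᵢ | ℱ_{tᵢ}]`, `Gⱼ = ∑_{i<j} σᵢ Δᵢ`, and let `ρ` be the first `tⱼ` with
`|Gⱼ| ≥ C` (`∞` if there is none). The increments of `S^ρ` are `1_{i<ρ} Δᵢ`, and
`1_{i<ρ} σᵢ` is `ℱ_{tᵢ}`-measurable, so
`Var(S^ρ, π) = E ∑ᵢ 1_{i<ρ} σᵢ Δᵢ = E I_S(H)` for the simple integrand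
`H = ∑ᵢ 1_{i<ρ} σᵢ 1_{(tᵢ, tᵢ₊₁]}` of sup norm at most `1`. Now `I_S(H) = G_{ρ ∧ n}`, which is at
most `C + 2 sup |S|` in absolute value because `G` moves by at most `2 sup |S|` per step, and
which is at least `C` on `{ρ < ∞}`. A good integrator sends the unit ball of simple integrands to
a set bounded in probability, so for a suitable `C` we get `P(ρ < ∞) ≤ ε` for every partition.
-/

theorem measurable_coe_sign : Measurable fun x : ℝ => (SignType.sign x : ℝ) := by
  have hcast : Monotone fun s : SignType => (s : ℝ) := by
    intro a b h; cases a <;> cases b <;> simp_all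
  exact (hcast.comp SignType.sign.monotone).measurable

theorem abs_coe_sign_le_one (x : ℝ) : |(SignType.sign x : ℝ)| ≤ 1 := by
  rcases lt_trichotomy x 0 with h | h | h <;> simp [h]

/-- On an `m`-measurable set, `|E[X | m]| = sign (E[X | m]) * E[X | m]` can be integrated as
`sign (E[X | m]) * X`, the sign being `m`-measurable. -/
theorem integral_abs_condExp_indicator {P : Measure Ω} {m : MeasurableSpace Ω} (hm : m ≤ m0)
    [SigmaFinite (P.trim hm)] {X : Ω → ℝ} (hX : Integrable X P) {s : Set Ω}
    (hs : MeasurableSet[m] s) :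
    ∫ ω, |(P[s.indicator X | m]) ω| ∂P
      = ∫ ω, s.indicator (fun ω => (SignType.sign ((P[X | m]) ω) : ℝ)) ω * X ω ∂P := by
  set σ : Ω → ℝ := fun ω => SignType.sign ((P[X | m]) ω)
  have hσ : StronglyMeasurable[m] σ :=
    (measurable_coe_sign.comp stronglyMeasurable_condExp.measurable).stronglyMeasurable
  have hσX : Integrable (σ * X) P :=
    hX.bdd_mul (hσ.mono hm).aestronglyMeasurable (ae_of_all _ fun ω => abs_coe_sign_le_one _)
  calc ∫ ω, |(P[s.indicator X | m]) ω| ∂P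
      = ∫ ω, s.indicator (σ * P[X | m]) ω ∂P := by
        refine integral_congr_ae ((condExp_indicator hX hs).mono fun ω hω => ?_)
        by_cases h : ω ∈ s <;> simp [hω, h, σ]
    _ = ∫ ω in s, (P[σ * X | m]) ω ∂P := by
        rw [integral_indicator (hm _ hs)]
        refine setIntegral_congr_ae (hm _ hs) ?_
        filter_upwards [condExp_mul_of_stronglyMeasurable_left hσ hσX hX] with ω hω _
        rw [hω]
    _ = ∫ ω, s.indicator σ ω * X ω ∂P := by
        simp_rw [setIntegral_condExp hm hσX hs, ← indicator_mul_left,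
          integral_indicator (hm _ hs)]
        rfl

namespace Partition

variable (π : Partition)

/-- `π.time j = t_{min j n}`: past its last point the partition stays at time `1`. -/
def time (j : ℕ) : ℝ := π.t ⟨min j π.n, Nat.lt_succ_of_le (min_le_right j π.n)⟩

theorem monotone_time : Monotone π.time := fun _ _ hij =>
  π.strictMono.monotone (Fin.mk_le_mk.mpr (min_le_min_right π.n hij))

theorem time_mem_Icc (j : ℕ) : π.time j ∈ Icc (0 : ℝ) 1 :=
  ⟨π.first ▸ π.strictMono.monotone (Fin.zero_le _),
    π.last ▸ π.strictMono.monotone (Fin.le_last _)⟩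

theorem time_val (i : Fin (π.n + 1)) : π.time i = π.t i :=
  congrArg π.t (Fin.ext (min_eq_left (Nat.lt_succ_iff.mp i.isLt)))

def filtration (ℱ : Filtration ℝ m0) : Filtration ℕ m0 where
  seq j := ℱ (π.time j)
  mono' _ _ hij := ℱ.mono (π.monotone_time hij)
  le' _ := ℱ.le _

def increment (S : ℝ → Ω → ℝ) (i : ℕ) (ω : Ω) : ℝ := S (π.time (i + 1)) ω - S (π.time i) ω

theorem increment_of_le (S : ℝ → Ω → ℝ) {i : ℕ} (hi : π.n ≤ i) : π.increment S i = 0 := by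
  ext ω
  simp only [increment, time, min_eq_right hi, min_eq_right (hi.trans i.le_succ), sub_self,
    Pi.zero_apply]

theorem meanVar_eq_sum_range (ℱ : Filtration ℝ m0) (P : Measure Ω) (X : ℝ → Ω → ℝ) :
    meanVar ℱ P X π = ∑ i ∈ Finset.range π.n, ∫ ω, |(P[π.increment X i | ℱ (π.time i)]) ω| ∂P := by
  rw [meanVar, ← Fin.sum_univ_eq_sum_range]
  refine Finset.sum_congr rfl fun i _ => ?_
  simp only [← π.time_val, Fin.val_succ, Fin.val_castSucc]
  rfl

theorem isStoppingTimeTop_map_time {ℱ : Filtration ℝ m0} {κ : Ω → WithTop ℕ}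
    (hκ : IsStoppingTime (π.filtration ℱ) κ) :
    IsStoppingTimeTop ℱ fun ω => (κ ω).map π.time := by
  intro t
  have hset : {ω | (κ ω).map π.time ≤ (t : WithTop ℝ)}
      = ⋃ (j : ℕ) (_ : π.time j ≤ t), {ω | κ ω ≤ j} := by
    ext ω
    simp only [mem_ofPred_eq, mem_iUnion, exists_prop]
    cases κ ω with
    | top => simp
    | coe j =>
      simp only [WithTop.map_coe, WithTop.coe_le_coe]
      exact ⟨fun h => ⟨j, h, le_rfl⟩,
        fun ⟨i, hi, hji⟩ => (π.monotone_time (WithTop.coe_le_coe.mp hji)).trans hi⟩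
  rw [hset]
  exact .iUnion fun j => .iUnion fun hj => ℱ.mono hj _ (hκ j)

theorem valuedInUnitOrTop_map_time (κ : Ω → WithTop ℕ) :
    ValuedInUnitOrTop fun ω => (κ ω).map π.time := fun ω => by
  dsimp only
  cases κ ω with
  | top => exact Or.inl rfl
  | coe j => exact Or.inr ⟨π.time j, π.time_mem_Icc j, rfl⟩

theorem increment_stopped_map_time (S : ℝ → Ω → ℝ) (κ : Ω → WithTop ℕ) (i : ℕ) :
    π.increment (stopped S fun ω => (κ ω).map π.time) i
      = {ω | (i : WithTop ℕ) < κ ω}.indicator (π.increment S i) := by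
  classical
  ext ω
  rcases eq_or_ne (κ ω) ⊤ with hκ | hκ
  · simp [increment, stopped, hκ]
  obtain ⟨j, hj⟩ := WithTop.ne_top_iff_exists.mp hκ
  have hstopped (q : ℕ) :
      stopped S (fun ω => (κ ω).map π.time) (π.time q) ω = S (π.time (min q j)) ω := by
    simp only [stopped, ← hj, WithTop.map_coe, ← WithTop.coe_min, WithTop.untopD_coe,
      π.monotone_time.map_min]
  simp only [increment, hstopped, indicator_apply, mem_ofPred_eq, ← hj, Nat.cast_withTop,
    WithTop.coe_lt_coe]
  split_ifs with hij
  · rw [min_eq_left hij, min_eq_left hij.le]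
  · rw [min_eq_right (not_lt.mp hij), min_eq_right (by omega), sub_self]

variable {π}

variable {ℱ : Filtration ℝ m0} {S : ℝ → Ω → ℝ}

theorem stronglyMeasurable_increment (hS : AdaptedOn ℱ S) (i : ℕ) :
    StronglyMeasurable[ℱ (π.time (i + 1))] (π.increment S i) :=
  (hS _ (π.time_mem_Icc _)).sub
    ((hS _ (π.time_mem_Icc _)).mono (ℱ.mono (π.monotone_time i.le_succ)))

theorem abs_increment_le {c : ℝ} (hc : ∀ t ω, |S t ω| ≤ c) (i : ℕ) (ω : Ω) :
    |π.increment S i ω| ≤ 2 * c := by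
  have h₁ := abs_le.mp (hc (π.time (i + 1)) ω)
  have h₂ := abs_le.mp (hc (π.time i) ω)
  rw [increment, abs_le]
  constructor <;> linarith

theorem integrable_increment {P : Measure Ω} [IsFiniteMeasure P] (hS : AdaptedOn ℱ S) {c : ℝ}
    (hc : ∀ t ω, |S t ω| ≤ c) (i : ℕ) : Integrable (π.increment S i) P :=
  .of_bound ((stronglyMeasurable_increment hS i).mono (ℱ.le _)).aestronglyMeasurable (2 * c)
    (ae_of_all _ (abs_increment_le hc i))

end Partition

namespace SimpleIntegrand

variable {ℱ : Filtration ℝ m0}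

theorem bddBy_of_abs_le (Hs : SimpleIntegrand ℱ) {c : ℝ} (hc : 0 ≤ c)
    (h : ∀ i ω, |Hs.H i ω| ≤ c) : Hs.BddBy c := by
  classical
  intro t ω
  set active := Finset.univ.filter fun i : Fin Hs.k =>
    Hs.τ i.castSucc ω < t ∧ t ≤ Hs.τ i.succ ω
  have hactive : active.card ≤ 1 := by
    refine Finset.card_le_one.mpr fun i hi j hj => ?_
    simp only [active, Finset.mem_filter, Finset.mem_univ, true_and] at hi hj
    by_contra hne
    wlog hij : i < j generalizing i j
    · exact this j i hj hi (Ne.symm hne) ((not_lt.mp hij).lt_of_ne (Ne.symm hne))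
    have := Hs.τ_mono ω (Fin.succ_le_castSucc_iff.mpr hij)
    linarith [hi.2, hj.1]
  calc |Hs.val t ω| = |∑ i ∈ active, Hs.H i ω| := by rw [val, Finset.sum_filter]
    _ ≤ ∑ i ∈ active, |Hs.H i ω| := Finset.abs_sum_le_sum_abs _ _
    _ ≤ active.card * c := by simpa using Finset.sum_le_card_nsmul active _ c fun i _ => h i ω
    _ ≤ c := mul_le_of_le_one_left hc (by exact_mod_cast hactive)

instance : SMul ℝ (SimpleIntegrand ℱ) where
  smul r Hs :=
    { Hs with
      H := fun i ω => r * Hs.H i ω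
      H_bdd := fun i => by
        obtain ⟨c, hc⟩ := Hs.H_bdd i
        exact ⟨|r| * c, fun ω => by
          rw [abs_mul]; exact mul_le_mul_of_nonneg_left (hc ω) (abs_nonneg r)⟩
      H_meas := fun i => stronglyMeasurable_const.mul (Hs.H_meas i) }

theorem val_smul (r : ℝ) (Hs : SimpleIntegrand ℱ) (t : ℝ) (ω : Ω) :
    (r • Hs).val t ω = r * Hs.val t ω := by
  simp only [val, Finset.mul_sum, mul_ite, mul_zero]
  rfl

theorem BddBy.smul {Hs : SimpleIntegrand ℱ} {c : ℝ} (h : Hs.BddBy c) (r : ℝ) :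
    (r • Hs).BddBy (|r| * c) := fun t ω => by
  rw [val_smul, abs_mul]
  exact mul_le_mul_of_nonneg_left (h t ω) (abs_nonneg r)

def ofPartition (π : Partition) (K : ℕ → Ω → ℝ)
    (hK : ∀ i, StronglyMeasurable[ℱ (π.time i)] (K i))
    (hK_bdd : ∀ i, ∃ c, ∀ ω, |K i ω| ≤ c) : SimpleIntegrand ℱ where
  k := π.n
  τ i _ := π.time i
  τ_mono _ _ _ hij := π.monotone_time hij
  τ_mem i _ := π.time_mem_Icc i
  τ_stopping i := isStoppingTime_const ℱ (π.time i)
  H i := K i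
  H_bdd i := hK_bdd i
  H_meas i := by rw [IsStoppingTime.measurableSpace_const]; exact hK i

end SimpleIntegrand

section ElemIntegral

variable {ℱ : Filtration ℝ m0}

theorem elemIntegral_smul (S : ℝ → Ω → ℝ) (r : ℝ) (Hs : SimpleIntegrand ℱ) (ω : Ω) :
    elemIntegral S (r • Hs) ω = r * elemIntegral S Hs ω := by
  simp only [elemIntegral, Finset.mul_sum]
  exact Finset.sum_congr rfl fun i _ => mul_assoc _ _ _

theorem elemIntegral_ofPartition (S : ℝ → Ω → ℝ) (π : Partition) (K : ℕ → Ω → ℝ)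
    (hK : ∀ i, StronglyMeasurable[ℱ (π.time i)] (K i))
    (hK_bdd : ∀ i, ∃ c, ∀ ω, |K i ω| ≤ c) (ω : Ω) :
    elemIntegral S (SimpleIntegrand.ofPartition π K hK hK_bdd) ω
      = ∑ i ∈ Finset.range π.n, K i ω * π.increment S i ω := by
  rw [elemIntegral, ← Fin.sum_univ_eq_sum_range]
  rfl

theorem GoodIntegrator.exists_measure_le_of_bddBy_one {P : Measure Ω} {S : ℝ → Ω → ℝ}
    (hS : GoodIntegrator ℱ P S) {ε : ℝ} (hε : 0 < ε) :
    ∃ C : ℝ, 0 < C ∧ ∀ Hs : SimpleIntegrand ℱ, Hs.BddBy 1 →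
      P {ω | C ≤ |elemIntegral S Hs ω|} ≤ ENNReal.ofReal ε := by
  by_contra! h
  choose Hs hHs hlarge using fun n : ℕ => h (n + 1) n.cast_add_one_pos
  have hscaled (n : ℕ) : ((1 / ((n : ℝ) + 1)) • Hs n).BddBy (1 / ((n : ℝ) + 1)) := by
    simpa [abs_of_pos (n.cast_add_one_pos : (0 : ℝ) < n + 1)] using (hHs n).smul (1 / ((n : ℝ) + 1))
  have hlim := tendstoInMeasure_iff_dist.mp
    (hS _ _ hscaled tendsto_one_div_add_atTop_nhds_zero_nat) 1 one_pos
  refine (ENNReal.ofReal_pos.mpr hε).not_ge (ge_of_tendsto' hlim fun n =>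
    (hlarge n).le.trans (measure_mono fun ω hω => ?_))
  have hpos : (0 : ℝ) < n + 1 := n.cast_add_one_pos
  simp only [mem_ofPred_eq, Pi.zero_apply, Real.dist_eq, sub_zero, elemIntegral_smul,
    abs_mul, abs_of_pos (one_div_pos.mpr hpos)] at hω ⊢
  rwa [one_div_mul_eq_div, le_div_iff₀ hpos, one_mul]

end ElemIntegral

theorem abs_sum_range_le_add {x : ℕ → ℝ} {B C : ℝ} {m : ℕ} (hC : 0 ≤ C)
    (hx : ∀ i, |x i| ≤ B) (hbefore : ∀ j < m, |∑ i ∈ Finset.range j, x i| < C) :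
    |∑ i ∈ Finset.range m, x i| ≤ C + B := by
  cases m with
  | zero => simpa using add_nonneg hC ((abs_nonneg _).trans (hx 0))
  | succ p =>
    rw [Finset.sum_range_succ]
    exact (abs_add_le _ _).trans (add_le_add (hbefore p p.lt_succ_self).le (hx p))

theorem filter_range_coe_lt (N : ℕ) (κ : WithTop ℕ) :
    (Finset.range N).filter (fun i : ℕ => (i : WithTop ℕ) < κ)
      = Finset.range (min N (κ.untopD N)) := by
  ext i
  cases κ with
  | top => simp
  | coe j => simp only [Finset.mem_filter, Finset.mem_range, Nat.cast_withTop,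
      WithTop.coe_lt_coe, WithTop.untopD_coe, lt_min_iff]

section ExitTime

variable (ℱ : Filtration ℝ m0) (P : Measure Ω) (S : ℝ → Ω → ℝ) (π : Partition) (C : ℝ)

def condSign (i : ℕ) (ω : Ω) : ℝ := SignType.sign ((P[π.increment S i | ℱ (π.time i)]) ω)

def signedSum (j : ℕ) (ω : Ω) : ℝ :=
  ∑ i ∈ Finset.range j, condSign ℱ P S π i ω * π.increment S i ω

def exitIndex : Ω → WithTop ℕ := hittingAfter (signedSum ℱ P S π) {x | C ≤ |x|} 0

def exitTime : Ω → WithTop ℝ := fun ω => (exitIndex ℱ P S π C ω).map π.time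

def stoppedSign (i : ℕ) : Ω → ℝ :=
  {ω | (i : WithTop ℕ) < exitIndex ℱ P S π C ω}.indicator (condSign ℱ P S π i)

variable {ℱ P S π C}

theorem abs_stoppedSign_le_one (i : ℕ) (ω : Ω) : |stoppedSign ℱ P S π C i ω| ≤ 1 := by
  classical
  rw [stoppedSign, indicator_apply]
  split_ifs
  exacts [abs_coe_sign_le_one _, by simp]

theorem stronglyMeasurable_condSign (i : ℕ) :
    StronglyMeasurable[ℱ (π.time i)] (condSign ℱ P S π i) :=
  (measurable_coe_sign.comp stronglyMeasurable_condExp.measurable).stronglyMeasurable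

theorem adapted_signedSum (hS : AdaptedOn ℱ S) : Adapted (π.filtration ℱ) (signedSum ℱ P S π) :=
  fun j => Finset.measurable_sum _ fun i hi =>
    have hij : i + 1 ≤ j := Finset.mem_range.mp hi
    ((stronglyMeasurable_condSign i).measurable.mono
        (ℱ.mono (π.monotone_time (i.le_succ.trans hij))) le_rfl).mul
      ((Partition.stronglyMeasurable_increment hS i).measurable.mono
        (ℱ.mono (π.monotone_time hij)) le_rfl)

theorem isStoppingTime_exitIndex (hS : AdaptedOn ℱ S) :
    IsStoppingTime (π.filtration ℱ) (exitIndex ℱ P S π C) :=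
  (adapted_signedSum hS).isStoppingTime_hittingAfter
    (measurableSet_le measurable_const measurable_abs)

theorem signedSum_eq_of_le {j : ℕ} (hj : π.n ≤ j) :
    signedSum ℱ P S π j = signedSum ℱ P S π π.n := by
  ext ω
  refine (Finset.sum_subset (Finset.range_subset_range.mpr hj) fun i _ hi => ?_).symm
  rw [π.increment_of_le S (not_lt.mp (Finset.mem_range.not.mp hi)), Pi.zero_apply, mul_zero]

theorem exitIndex_le_of_ne_top {ω : Ω} (h : exitIndex ℱ P S π C ω ≠ ⊤) :
    exitIndex ℱ P S π C ω ≤ π.n := by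
  obtain ⟨j, -, hj⟩ : ∃ j, 0 ≤ j ∧ signedSum ℱ P S π j ω ∈ {x | C ≤ |x|} := by
    simpa [exitIndex, hittingAfter_eq_top_iff] using h
  rcases le_total j π.n with hjn | hjn
  · exact (hittingAfter_le_of_mem j.zero_le hj).trans (WithTop.coe_le_coe.mpr hjn)
  · exact hittingAfter_le_of_mem π.n.zero_le (signedSum_eq_of_le hjn ▸ hj)

theorem measurableSet_lt_exitIndex (hS : AdaptedOn ℱ S) (i : ℕ) :
    MeasurableSet[ℱ (π.time i)] {ω | (i : WithTop ℕ) < exitIndex ℱ P S π C ω} :=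
  (isStoppingTime_exitIndex hS).measurableSet_gt i

theorem stronglyMeasurable_stoppedSign (hS : AdaptedOn ℱ S) (i : ℕ) :
    StronglyMeasurable[ℱ (π.time i)] (stoppedSign ℱ P S π C i) :=
  (stronglyMeasurable_condSign i).indicator (measurableSet_lt_exitIndex hS i)

variable (ℱ P S π C) in
def exitIntegrand (hS : AdaptedOn ℱ S) : SimpleIntegrand ℱ :=
  .ofPartition π (stoppedSign ℱ P S π C) (stronglyMeasurable_stoppedSign hS)
    fun i => ⟨1, abs_stoppedSign_le_one i⟩

theorem exitIntegrand_bddBy (hS : AdaptedOn ℱ S) : (exitIntegrand ℱ P S π C hS).BddBy 1 :=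
  SimpleIntegrand.bddBy_of_abs_le _ zero_le_one fun i => abs_stoppedSign_le_one i

theorem elemIntegral_exitIntegrand (hS : AdaptedOn ℱ S) (ω : Ω) :
    elemIntegral S (exitIntegrand ℱ P S π C hS) ω
      = signedSum ℱ P S π (min π.n ((exitIndex ℱ P S π C ω).untopD π.n)) ω := by
  rw [exitIntegrand, elemIntegral_ofPartition, signedSum, ← filter_range_coe_lt,
    Finset.sum_filter]
  simp only [stoppedSign, indicator_apply, mem_ofPred_eq, ite_mul, zero_mul]

theorem abs_elemIntegral_exitIntegrand_le (hS : AdaptedOn ℱ S) {c : ℝ}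
    (hc : ∀ t ω, |S t ω| ≤ c) (hC : 0 ≤ C) (ω : Ω) :
    |elemIntegral S (exitIntegrand ℱ P S π C hS) ω| ≤ C + 2 * c := by
  rw [elemIntegral_exitIntegrand]
  refine abs_sum_range_le_add hC (fun i => ?_) fun j hj => ?_
  · rw [abs_mul]
    exact (mul_le_of_le_one_left (abs_nonneg _) (abs_coe_sign_le_one _)).trans
      (Partition.abs_increment_le hc i ω)
  · have hlt : (j : WithTop ℕ) < exitIndex ℱ P S π C ω := by
      cases h : exitIndex ℱ P S π C ω with
      | top => exact WithTop.coe_lt_top j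
      | coe k => rw [h] at hj; exact WithTop.coe_lt_coe.mpr (lt_min_iff.mp hj).2
    exact not_le.mp
      (notMem_of_lt_hittingAfter (u := signedSum ℱ P S π) (s := {x | C ≤ |x|}) hlt j.zero_le)

theorem le_abs_elemIntegral_exitIntegrand (hS : AdaptedOn ℱ S) {ω : Ω}
    (h : exitTime ℱ P S π C ω ≠ ⊤) :
    C ≤ |elemIntegral S (exitIntegrand ℱ P S π C hS) ω| := by
  have hk : exitIndex ℱ P S π C ω ≠ ⊤ := fun hk => h (by simp [exitTime, hk])
  have hmem : C ≤ |signedSum ℱ P S π (exitIndex ℱ P S π C ω).untopA ω| :=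
    hittingAfter_mem_set_of_ne_top hk
  have hle := exitIndex_le_of_ne_top hk
  rw [elemIntegral_exitIntegrand]
  lift exitIndex ℱ P S π C ω to ℕ using hk with k
  rw [WithTop.untopA, WithTop.untopD_coe] at hmem
  rwa [WithTop.untopD_coe, min_eq_right (by simpa using hle)]

theorem isStoppingTimeTop_exitTime (hS : AdaptedOn ℱ S) :
    IsStoppingTimeTop ℱ (exitTime ℱ P S π C) :=
  π.isStoppingTimeTop_map_time (isStoppingTime_exitIndex hS)

theorem valuedInUnitOrTop_exitTime : ValuedInUnitOrTop (exitTime ℱ P S π C) :=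
  π.valuedInUnitOrTop_map_time _

theorem measure_compl_exitTime_eq_top_le (hS : AdaptedOn ℱ S) :
    P {ω | exitTime ℱ P S π C ω = ⊤}ᶜ
      ≤ P {ω | C ≤ |elemIntegral S (exitIntegrand ℱ P S π C hS) ω|} :=
  measure_mono fun _ h => le_abs_elemIntegral_exitIntegrand hS h

theorem meanVar_stopped_exitTime_le [IsProbabilityMeasure P] (hS : AdaptedOn ℱ S) {c : ℝ}
    (hc : ∀ t ω, |S t ω| ≤ c) (hC : 0 ≤ C) :
    meanVar ℱ P (stopped S (exitTime ℱ P S π C)) π ≤ C + 2 * c := by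
  set K := stoppedSign ℱ P S π C
  have hK_int (i : ℕ) : Integrable (fun ω => K i ω * π.increment S i ω) P :=
    (Partition.integrable_increment hS hc i).bdd_mul
      ((stronglyMeasurable_stoppedSign hS i).mono (ℱ.le _)).aestronglyMeasurable
      (ae_of_all _ (abs_stoppedSign_le_one i))
  calc meanVar ℱ P (stopped S (exitTime ℱ P S π C)) π
      = ∑ i ∈ Finset.range π.n, ∫ ω, K i ω * π.increment S i ω ∂P := by
        rw [π.meanVar_eq_sum_range]
        refine Finset.sum_congr rfl fun i _ => ?_
        unfold exitTime
        rw [π.increment_stopped_map_time]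
        exact integral_abs_condExp_indicator (ℱ.le _) (Partition.integrable_increment hS hc i)
          (measurableSet_lt_exitIndex hS i)
    _ = ∫ ω, ∑ i ∈ Finset.range π.n, K i ω * π.increment S i ω ∂P :=
        (integral_finsetSum _ fun i _ => hK_int i).symm
    _ ≤ ∫ _, C + 2 * c ∂P := by
        refine integral_mono (integrable_finsetSum _ fun i _ => hK_int i) (integrable_const _)
          fun ω => (le_abs_self _).trans ?_
        have := abs_elemIntegral_exitIntegrand_le (P := P) (π := π) hS hc hC ω
        rwa [exitIntegrand, elemIntegral_ofPartition] at this
    _ = C + 2 * c := by simp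

end ExitTime

theorem one_sub_le_measure_of_measure_compl_le {P : Measure Ω} [IsProbabilityMeasure P]
    {s : Set Ω} {δ : ENNReal} (h : P sᶜ ≤ δ) : 1 - δ ≤ P s := by
  rw [tsub_le_iff_right]
  calc (1 : ENNReal) = P univ := measure_univ.symm
    _ ≤ P s + P sᶜ := measure_univ_le_add_compl s
    _ ≤ P s + δ := by gcongr

theorem goodIntegrator_meanVar_bound_general
    (ℱ : Filtration ℝ m0) (P : Measure Ω) [IsProbabilityMeasure P]
    (S : ℝ → Ω → ℝ)
    (hS_bdd : ∃ C : ℝ, ∀ t ω, |S t ω| ≤ C)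
    (hS_adapted : AdaptedOn ℱ S)
    (hS_good : GoodIntegrator ℱ P S) :
    ∀ ε : ℝ, 0 < ε → ∃ C : ℝ, 0 < C ∧ ∃ ρ : ℕ → Ω → WithTop ℝ,
      ∀ n : ℕ, IsStoppingTimeTop ℱ (ρ n) ∧ ValuedInUnitOrTop (ρ n) ∧
        1 - ENNReal.ofReal ε ≤ P {ω | ρ n ω = ⊤} ∧
        meanVar ℱ P (stopped S (ρ n)) (dyadicPartition n) ≤ C := by
  intro ε hε
  obtain ⟨c, hc⟩ := hS_bdd
  have hc' : ∀ t ω, |S t ω| ≤ |c| := fun t ω => (hc t ω).trans (le_abs_self c)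
  obtain ⟨C, hC, hCε⟩ := hS_good.exists_measure_le_of_bddBy_one hε
  refine ⟨C + 2 * |c|, by positivity, fun n => exitTime ℱ P S (dyadicPartition n) C,
    fun n => ⟨isStoppingTimeTop_exitTime hS_adapted, valuedInUnitOrTop_exitTime, ?_,
      meanVar_stopped_exitTime_le hS_adapted hc' hC.le⟩⟩
  exact one_sub_le_measure_of_measure_compl_le
    ((measure_compl_exitTime_eq_top_le hS_adapted).trans (hCε _ (exitIntegrand_bddBy hS_adapted)))

/-- If `S` is a càdlàg bounded adapted good integrator then for every `ε > 0`
there are `C > 0` and stopping times `(ρ_n)` with `P(ρ_n = ∞) ≥ 1 - ε` and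
`Var(S^{ρ_n}, D_n) ≤ C` for all `n`. -/
theorem goodIntegrator_meanVar_bound
    (ℱ : Filtration ℝ m0) (P : Measure Ω) [IsProbabilityMeasure P]
    (hUC : UsualConditions ℱ P) (S : ℝ → Ω → ℝ)
    (hS_bdd : ∃ C : ℝ, ∀ t ω, |S t ω| ≤ C)
    (hS_cadlag : Cadlag S) (hS_adapted : AdaptedOn ℱ S)
    (hS_good : GoodIntegrator ℱ P S) :
    ∀ ε : ℝ, 0 < ε → ∃ C : ℝ, 0 < C ∧ ∃ ρ : ℕ → Ω → WithTop ℝ,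
      ∀ n : ℕ, IsStoppingTimeTop ℱ (ρ n) ∧ ValuedInUnitOrTop (ρ n) ∧
        1 - ENNReal.ofReal ε ≤ P {ω | ρ n ω = ⊤} ∧
        meanVar ℱ P (stopped S (ρ n)) (dyadicPartition n) ≤ C :=
  goodIntegrator_meanVar_bound_general ℱ P S hS_bdd hS_adapted hS_good

end BD
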